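/- arXiv:2406.01577 — 6 statements merged into one kernel-verified Lean document; each statement's English description precedes it below -/
import Mathlib

section
/- Let T ≥ 1, G > 0, ε_T > 0, and let C ≥ 1 satisfy the Rademacher quadratic anticoncentration property for horizon T. Let a_1,…,a_T be a one-dimensional online algorithm over T rounds which guarantees that for every loss sequence g_1,…,g_T ∈ ℝ with |g_t| ≤ G for all t, its regret against the zero comparator satisfies ∑_{t=1}^T g_t·a_t(g_1,…,g_{t−1}) ≤ G·ε_T. Let M ∈ ℝ^{T×T} be symmetric positive definite, set A := M^{−1} and B := A − Diag(A), assume B ≠ 0 and ‖B‖_F² ≥ (T/2)·max_{1≤i≤T} ∑_{j=1}^T B_{ij}². Then for every P > 0 such that 4C² ≤ log₂(√(P·(Tr(A)+‖B‖_F))/(2ε_T)) ≤ T, there exist losses g_1,…,g_T ∈ ℝ with |g_t| ≤ G for all t and a comparator sequence u_1,…,u_T ∈ ℝ with ‖(u_1,…,u_T)ᵀ‖_M = √P such that, with w_t := a_t(g_1,…,g_{t−1}), the dynamic regret satisfies ∑_{t=1}^T g_t(w_t − u_t) ≥ G·ε_T + (G/2)·√( P·( Tr(A) + ‖B‖_F·√(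 log₂(√(P·(Tr(A)+‖B‖_F))/(2ε_T)) / (4C²) ) ) ). -/
open Matrix Finset

/-- The Frobenius norm `‖B‖_F := √(∑_{i,j} B_{ij}²)`. -/
noncomputable def frobNorm {T : ℕ} (B : Matrix (Fin T) (Fin T) ℝ) : ℝ :=
  Real.sqrt (∑ i : Fin T, ∑ j : Fin T, (B i j)^2)

/-- The sign vector associated with `ε : Fin T → Bool`. -/
def signVec {T : ℕ} (ε : Fin T → Bool) : Fin T → ℝ :=
  fun i => if ε i then 1 else -1

/-- `C ≥ 1` satisfies the **Rademacher quadratic anticoncentration property**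
for horizon `T`: for every nonzero symmetric `B ∈ ℝ^{T×T}` with zero diagonal
and every `1 ≤ q ≤ ‖B‖_F/(C√(2·max_i ∑_j B_{ij}²))`, independent uniform signs
`Y ∈ {−1,1}^T` satisfy `Pr(∑_{i,j} Y_iY_jB_{ij} ≥ q‖B‖_F) ≥ 2^{−4C²q²}`
(probability computed by uniform counting over `{−1,1}^T`). -/
noncomputable def RademacherAnticoncentration (T : ℕ) (C : ℝ) : Prop :=
  ∀ B : Matrix (Fin T) (Fin T) ℝ, B ≠ 0 → B.IsSymm → (∀ i, B i i = 0) →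
    ∀ q : ℝ, 1 ≤ q →
      q ≤ frobNorm B /
            (C * Real.sqrt (2 * ⨆ i : Fin T, ∑ j : Fin T, (B i j)^2)) →
      (2 : ℝ) ^ (-(4 * C^2 * q^2)) ≤
        ((Finset.univ.filter (fun ε : Fin T → Bool =>
            q * frobNorm B ≤
              ∑ i : Fin T, ∑ j : Fin T, signVec ε i * signVec ε j * B i j)).card : ℝ)
          / 2^T

/-! Play the losses `G·Y_t` for uniform random signs `Y`. As `w_t` sees only `Y_1, …, Y_{t-1}`,
flipping `Y_t` shows that the algorithm's gain `∑ G Y_t w_t` has mean zero; being at most `G ε_T`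
everywhere, it is at least `G ε_T (1 - 1/p)` somewhere on every event of probability `p`.
Anticoncentration gives probability `p ≥ 2^(-L)` to the event `YᵀBY ≥ q ‖B‖_F`, `q² = L/(4C²)`.
There the comparator `u = -√(P / YᵀAY) • A Y` has `‖u‖_M = √P` and gains `G √(P · YᵀAY)`, where
`YᵀAY = Tr A + YᵀBY`. The choice `2^L = √(P (Tr A + ‖B‖_F)) / (2 ε_T)` makes the algorithm's
deficit `G ε_T 2^L` at most half of that gain. -/

lemma signVec_mul_self {T : ℕ} (ε : Fin T → Bool) (i : Fin T) :
    signVec ε i * signVec ε i = 1 := by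
  unfold signVec; split <;> norm_num

lemma abs_signVec {T : ℕ} (ε : Fin T → Bool) (i : Fin T) : |signVec ε i| = 1 := by
  unfold signVec; split <;> norm_num

lemma signVec_update_not_self {T : ℕ} (ε : Fin T → Bool) (t : Fin T) :
    signVec (Function.update ε t (!ε t)) t = -signVec ε t := by
  unfold signVec; cases ε t <;> simp

lemma signVec_update_of_ne {T : ℕ} (ε : Fin T → Bool) {s t : Fin T} (h : s ≠ t) (b : Bool) :
    signVec (Function.update ε t b) s = signVec ε s := by
  simp only [signVec, Function.update_of_ne h]

lemma sum_signVec_mul_eq_zero {T : ℕ} (t : Fin T) (f : (Fin T → Bool) → ℝ)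
    (hf : ∀ ε, f (Function.update ε t (!ε t)) = f ε) :
    ∑ ε, signVec ε t * f ε = 0 := by
  refine sum_ninvolution (fun ε => Function.update ε t (!ε t)) (fun ε => ?_)
    (fun ε _ h => ?_) (fun _ => mem_univ _) (fun ε => ?_)
  · rw [hf, signVec_update_not_self]; ring
  · simpa using congrFun h t
  · simp

def IsCausal {T : ℕ} (alg : Fin T → (Fin T → ℝ) → ℝ) : Prop :=
  ∀ (t : Fin T) (g g' : Fin T → ℝ),
    (∀ s : Fin T, s < t → g s = g' s) → alg t g = alg t g'

lemma IsCausal.sum_signVec_gain_eq_zero {T : ℕ} {alg : Fin T → (Fin T → ℝ) → ℝ}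
    (halg : IsCausal alg) (G : ℝ) :
    ∑ ε : Fin T → Bool, ∑ t, G * signVec ε t * alg t (fun s => G * signVec ε s) = 0 := by
  rw [sum_comm]
  refine sum_eq_zero fun t _ => ?_
  have hflip : ∀ ε, alg t (fun s => G * signVec (Function.update ε t (!ε t)) s) =
      alg t (fun s => G * signVec ε s) :=
    fun ε => halg t _ _ fun s hs => by rw [signVec_update_of_ne ε hs.ne]
  calc ∑ ε, G * signVec ε t * alg t (fun s => G * signVec ε s)
      = ∑ ε, signVec ε t * (G * alg t fun s => G * signVec ε s) :=
        sum_congr rfl fun ε _ => by ring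
    _ = 0 := sum_signVec_mul_eq_zero t _ fun ε => by rw [hflip]

lemma exists_mem_sub_mul_card_div_le {α : Type*} [Fintype α] [DecidableEq α] {S : α → ℝ}
    {β : ℝ} (hS : ∀ a, S a ≤ β) (hsum : ∑ a, S a = 0) {E : Finset α} (hE : E.Nonempty) :
    ∃ a ∈ E, β - β * Fintype.card α / #E ≤ S a := by
  refine exists_le_of_sum_le hE ?_
  have hcompl : ∑ a ∈ Eᶜ, S a ≤ #Eᶜ • β := sum_le_card_nsmul _ _ _ fun a _ => hS a
  have hcard : (#Eᶜ : ℝ) = Fintype.card α - #E := by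
    rw [card_compl, Nat.cast_sub E.card_le_univ]
  have hE0 : (#E : ℝ) ≠ 0 := by exact_mod_cast hE.card_pos.ne'
  rw [nsmul_eq_mul, hcard] at hcompl
  rw [sum_const, nsmul_eq_mul, mul_sub, mul_div_cancel₀ _ hE0]
  linarith [sum_add_sum_compl E S]

lemma signVec_dotProduct_mulVec {T : ℕ} (A : Matrix (Fin T) (Fin T) ℝ) (ε : Fin T → Bool) :
    signVec ε ⬝ᵥ (A *ᵥ signVec ε) = A.trace +
      ∑ i, ∑ j, signVec ε i * signVec ε j * (A - diagonal fun i => A i i) i j := by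
  simp only [dotProduct, mulVec, Matrix.sub_apply, diagonal_apply, mul_sub, sum_sub_distrib,
    mul_sum, mul_ite, mul_zero, sum_ite_eq, mem_univ, if_true, trace, Matrix.diag]
  simp only [signVec_mul_self, one_mul, add_sub_cancel]
  exact sum_congr rfl fun i _ => sum_congr rfl fun j _ => by ring

lemma isSymm_sub_diagonal {n α : Type*} [DecidableEq n] [AddGroup α] {A : Matrix n n α}
    (hA : A.IsSymm) : (A - diagonal fun i => A i i).IsSymm := by
  rw [Matrix.IsSymm, transpose_sub, hA, diagonal_transpose]

lemma iSup_sum_sq_pos {T : ℕ} {B : Matrix (Fin T) (Fin T) ℝ} (hB : B ≠ 0) :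
    0 < ⨆ i, ∑ j, B i j ^ 2 := by
  obtain ⟨i, j, hij⟩ : ∃ i j, B i j ≠ 0 := by
    by_contra! h
    exact hB (Matrix.ext h)
  calc 0 < B i j ^ 2 := by positivity
    _ ≤ ∑ j, B i j ^ 2 := single_le_sum (fun j _ => sq_nonneg (B i j)) (mem_univ j)
    _ ≤ ⨆ i, ∑ j, B i j ^ 2 :=
      le_ciSup (f := fun i => ∑ j, B i j ^ 2) (Finite.bddAbove_range _) i

lemma le_frobNorm_div_of_four_mul_sq_le {T : ℕ} {B : Matrix (Fin T) (Fin T) ℝ} (hB : B ≠ 0)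
    (hBF : ((T : ℝ) / 2) * (⨆ i, ∑ j, B i j ^ 2) ≤ ∑ i, ∑ j, B i j ^ 2)
    {C q : ℝ} (hC : 0 < C) (hq : 0 ≤ q) (hqT : 4 * C ^ 2 * q ^ 2 ≤ T) :
    q ≤ frobNorm B / (C * √(2 * ⨆ i, ∑ j, B i j ^ 2)) := by
  have hsup := iSup_sum_sq_pos hB
  rw [le_div_iff₀ (by positivity)]
  refine (Real.le_sqrt (by positivity)
    (sum_nonneg fun i _ => sum_nonneg fun j _ => sq_nonneg _)).2 ?_
  rw [mul_pow, mul_pow, Real.sq_sqrt (by positivity)]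
  nlinarith

-- The comparator `u = -√(P / vᵀAv) • A v` attains the dual norm of `v`.
lemma exists_dotProduct_mulVec_eq_and_neg_dotProduct_eq {n : Type*} [Fintype n] [DecidableEq n]
    {M A : Matrix n n ℝ} (hMA : M * A = 1) (v : n → ℝ) (hv : 0 < v ⬝ᵥ (A *ᵥ v))
    {P : ℝ} (hP : 0 ≤ P) :
    ∃ u, u ⬝ᵥ (M *ᵥ u) = P ∧ -(v ⬝ᵥ u) = √(P * (v ⬝ᵥ (A *ᵥ v))) := by
  set R := v ⬝ᵥ (A *ᵥ v)
  set c := √P / √R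
  have hc : c ^ 2 * R = P := by
    rw [div_pow, Real.sq_sqrt hP, Real.sq_sqrt hv.le, div_mul_cancel₀ _ hv.ne']
  refine ⟨(-c) • (A *ᵥ v), ?_, ?_⟩
  · rw [mulVec_smul, mulVec_mulVec, hMA, one_mulVec, smul_dotProduct, dotProduct_smul,
      dotProduct_comm, smul_eq_mul, smul_eq_mul, ← hc]
    ring
  · have hR : √R ≠ 0 := (Real.sqrt_pos.2 hv).ne'
    calc -(v ⬝ᵥ (-c) • (A *ᵥ v)) = √P / √R * (√R * √R) := by
          rw [dotProduct_smul, smul_eq_mul, Real.mul_self_sqrt hv.le]; ring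
      _ = √(P * R) := by rw [Real.sqrt_mul hP]; field_simp

lemma exists_dotProduct_mulVec_eq_and_sum_mul_sub_eq {n : Type*} [Fintype n] [DecidableEq n]
    {M A : Matrix n n ℝ} (hMA : M * A = 1) {v : n → ℝ} (hv : 0 < v ⬝ᵥ (A *ᵥ v))
    {P : ℝ} (hP : 0 ≤ P) (G : ℝ) (w : n → ℝ) :
    ∃ u, u ⬝ᵥ (M *ᵥ u) = P ∧
      ∑ t, G * v t * (w t - u t) = ∑ t, G * v t * w t + G * √(P * (v ⬝ᵥ (A *ᵥ v))) := by
  obtain ⟨u, hu, hvu⟩ := exists_dotProduct_mulVec_eq_and_neg_dotProduct_eq hMA v hv hP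
  refine ⟨u, hu, ?_⟩
  rw [← hvu, dotProduct, mul_neg, Finset.mul_sum]
  simp only [mul_sub, sum_sub_distrib, mul_assoc]
  ring

lemma RademacherAnticoncentration.nonempty_and_two_pow_div_card_le {T : ℕ} {C : ℝ}
    (h : RademacherAnticoncentration T C) {B : Matrix (Fin T) (Fin T) ℝ} (hB : B ≠ 0)
    (hsymm : B.IsSymm) (hdiag : ∀ i, B i i = 0) {q : ℝ} (hq1 : 1 ≤ q)
    (hq : q ≤ frobNorm B / (C * √(2 * ⨆ i, ∑ j, B i j ^ 2))) :
    let E := univ.filter fun ε : Fin T → Bool =>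
      q * frobNorm B ≤ ∑ i, ∑ j, signVec ε i * signVec ε j * B i j
    E.Nonempty ∧ (2 : ℝ) ^ T / #E ≤ 2 ^ (4 * C ^ 2 * q ^ 2) := by
  intro E
  have hprob := h B hB hsymm hdiag q hq1 hq
  have hpos : (0 : ℝ) < #E := (div_pos_iff_of_pos_right (by positivity)).1
    ((Real.rpow_pos_of_pos two_pos _).trans_le hprob)
  refine ⟨card_pos.1 (by exact_mod_cast hpos), ?_⟩
  rw [Real.rpow_neg zero_le_two] at hprob
  calc (2 : ℝ) ^ T / #E = ((#E : ℝ) / 2 ^ T)⁻¹ := (inv_div _ _).symm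
    _ ≤ ((2 : ℝ) ^ (4 * C ^ 2 * q ^ 2))⁻¹⁻¹ := inv_anti₀ (by positivity) hprob
    _ = _ := inv_inv _

lemma IsCausal.exists_mem_signVec_gain_ge {T : ℕ} {alg : Fin T → (Fin T → ℝ) → ℝ}
    (halg : IsCausal alg) {G εT : ℝ} (hG : 0 < G) (hε : 0 ≤ εT)
    (hregret : ∀ g : Fin T → ℝ, (∀ t, |g t| ≤ G) → ∑ t : Fin T, g t * alg t g ≤ G * εT)
    {E : Finset (Fin T → Bool)} (hE : E.Nonempty) {K : ℝ} (hK : (2 : ℝ) ^ T / #E ≤ K) :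
    ∃ ε ∈ E, G * εT - G * εT * K ≤
      ∑ t, G * signVec ε t * alg t (fun s => G * signVec ε s) := by
  obtain ⟨ε, hεE, hgain⟩ := exists_mem_sub_mul_card_div_le
    (S := fun ε => ∑ t, G * signVec ε t * alg t (fun s => G * signVec ε s))
    (fun ε => hregret _ fun t => by rw [abs_mul, abs_signVec, mul_one, abs_of_pos hG])
    (halg.sum_signVec_gain_eq_zero G) hE
  refine ⟨ε, hεE, le_trans ?_ hgain⟩
  have hcard : (Fintype.card (Fin T → Bool) : ℝ) = 2 ^ T := by simp
  rw [hcard, mul_div_assoc]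
  exact sub_le_sub_left (mul_le_mul_of_nonneg_left hK (by positivity)) _

lemma exists_signVec_gain_ge_and_quadForm_ge {T : ℕ} {C : ℝ}
    (hanti : RademacherAnticoncentration T C) {alg : Fin T → (Fin T → ℝ) → ℝ}
    (halg : IsCausal alg) {G εT : ℝ} (hG : 0 < G) (hε : 0 ≤ εT)
    (hregret : ∀ g : Fin T → ℝ, (∀ t, |g t| ≤ G) → ∑ t : Fin T, g t * alg t g ≤ G * εT)
    {B : Matrix (Fin T) (Fin T) ℝ} (hB : B ≠ 0) (hsymm : B.IsSymm) (hdiag : ∀ i, B i i = 0)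
    (hBF : ((T : ℝ) / 2) * (⨆ i, ∑ j, B i j ^ 2) ≤ ∑ i, ∑ j, B i j ^ 2)
    (hC : 0 < C) {q : ℝ} (hq1 : 1 ≤ q) (hqT : 4 * C ^ 2 * q ^ 2 ≤ T) :
    ∃ ε : Fin T → Bool,
      G * εT - G * εT * 2 ^ (4 * C ^ 2 * q ^ 2) ≤
        ∑ t, G * signVec ε t * alg t (fun s => G * signVec ε s) ∧
      q * frobNorm B ≤ ∑ i, ∑ j, signVec ε i * signVec ε j * B i j := by
  obtain ⟨hE, hcard⟩ := hanti.nonempty_and_two_pow_div_card_le hB hsymm hdiag hq1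
    (le_frobNorm_div_of_four_mul_sq_le hB hBF hC (by linarith) hqT)
  obtain ⟨ε, hεE, hgain⟩ := halg.exists_mem_signVec_gain_ge hG hε hregret hE hcard
  exact ⟨ε, hgain, (mem_filter.1 hεE).2⟩

theorem dynamic_regret_lower_bound_frontier_general (T : ℕ)
    (G εT C : ℝ) (hG : 0 < G) (hε : 0 < εT) (hC : 1 ≤ C)
    (hanti : RademacherAnticoncentration T C)
    (alg : Fin T → (Fin T → ℝ) → ℝ)
    (hcausal : ∀ (t : Fin T) (g g' : Fin T → ℝ),
      (∀ s : Fin T, s < t → g s = g' s) → alg t g = alg t g')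
    (hregret : ∀ g : Fin T → ℝ, (∀ t, |g t| ≤ G) →
      ∑ t : Fin T, g t * alg t g ≤ G * εT)
    (M : Matrix (Fin T) (Fin T) ℝ) (hM : M.PosDef)
    (A B : Matrix (Fin T) (Fin T) ℝ) (hA : A = M⁻¹)
    (hB : B = A - Matrix.diagonal (fun i => A i i)) (hBne : B ≠ 0)
    (hBF : ((T : ℝ) / 2) * (⨆ i : Fin T, ∑ j : Fin T, (B i j)^2)
            ≤ ∑ i : Fin T, ∑ j : Fin T, (B i j)^2) :
    ∀ P : ℝ, 0 < P →
      4 * C^2 ≤ Real.logb 2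
          (Real.sqrt (P * (A.trace + frobNorm B)) / (2 * εT)) →
      Real.logb 2 (Real.sqrt (P * (A.trace + frobNorm B)) / (2 * εT)) ≤ T →
      ∃ g u : Fin T → ℝ,
        (∀ t, |g t| ≤ G) ∧
        Real.sqrt (u ⬝ᵥ (M *ᵥ u)) = Real.sqrt P ∧
        G * εT + (G / 2) * Real.sqrt (P * (A.trace + frobNorm B *
            Real.sqrt (Real.logb 2
                (Real.sqrt (P * (A.trace + frobNorm B)) / (2 * εT))
              / (4 * C^2))))
          ≤ ∑ t : Fin T, g t * (alg t g - u t) := by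
  intro P hP hL hLT
  set x := √(P * (A.trace + frobNorm B))
  set L := Real.logb 2 (x / (2 * εT))
  set q := √(L / (4 * C ^ 2))
  have hL0 : 0 < L := lt_of_lt_of_le (by nlinarith) hL
  have hx : 0 < x := by
    by_contra! h
    simp [L, le_antisymm h (Real.sqrt_nonneg _)] at hL0
  have hqL : 4 * C ^ 2 * q ^ 2 = L := by
    rw [Real.sq_sqrt (by positivity)]; field_simp
  have hq1 : 1 ≤ q := Real.one_le_sqrt.2 ((one_le_div (by positivity)).2 hL)
  have hAsymm : A.IsSymm := by simpa [Matrix.IsHermitian] using hA ▸ hM.isHermitian.inv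
  have hsymm : B.IsSymm := hB ▸ isSymm_sub_diagonal hAsymm
  have hdiag : ∀ i, B i i = 0 := fun i => by simp [hB]
  obtain ⟨ε, hgain, hquad⟩ := exists_signVec_gain_ge_and_quadForm_ge (G := G) hanti hcausal hG
    hε.le hregret hBne hsymm hdiag hBF (by linarith) hq1 (hqL ▸ hLT)
  rw [hqL, Real.rpow_logb two_pos (by norm_num) (by positivity)] at hgain
  have hR : A.trace + q * frobNorm B ≤ signVec ε ⬝ᵥ (A *ᵥ signVec ε) := by
    rw [signVec_dotProduct_mulVec, ← hB]; linarith
  have hMA : M * A = 1 := hA ▸ M.mul_nonsing_inv hM.det_pos.ne'.isUnit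
  have hqB : frobNorm B ≤ frobNorm B * q := le_mul_of_one_le_right (Real.sqrt_nonneg _) hq1
  have hR0 : 0 < A.trace + q * frobNorm B := by
    linarith [(pos_iff_pos_of_mul_pos (Real.sqrt_pos.1 hx)).1 hP]
  obtain ⟨u, hu, hsplit⟩ := exists_dotProduct_mulVec_eq_and_sum_mul_sub_eq hMA
    (hR0.trans_le hR) hP.le G (fun t => alg t fun s => G * signVec ε s)
  refine ⟨fun t => G * signVec ε t, u,
    fun t => by rw [abs_mul, abs_signVec, mul_one, abs_of_pos hG], by rw [hu], ?_⟩
  rw [hsplit]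
  have hxy : x ≤ √(P * (A.trace + frobNorm B * q)) := Real.sqrt_le_sqrt (by gcongr)
  have hyR : √(P * (A.trace + frobNorm B * q)) ≤
      √(P * (signVec ε ⬝ᵥ (A *ᵥ signVec ε))) := Real.sqrt_le_sqrt (by gcongr; linarith)
  have hxε : G * εT * (x / (2 * εT)) = G / 2 * x := by field_simp
  nlinarith [mul_le_mul_of_nonneg_left hxy hG.le, mul_le_mul_of_nonneg_left hyR hG.le]

/-- **Frontier of dynamic regret lower bounds.**
Let `alg` be a one-dimensional online algorithm over `T` rounds (`alg t g`
plays round `t` using only `g_s`, `s < t`) with regret against the zero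
comparator at most `G·ε_T` on all loss sequences bounded by `G`. Let `M` be
symmetric positive definite, `A := M⁻¹`, `B := A − Diag(A) ≠ 0`, and assume
`‖B‖_F² ≥ (T/2)·max_i ∑_j B_{ij}²`. Then for every `P > 0` with
`4C² ≤ log₂(√(P(Tr(A)+‖B‖_F))/(2ε_T)) ≤ T`, there are losses bounded by `G`
and a comparator sequence `u` with `‖u‖_M = √P` whose dynamic regret is at
least `G·ε_T + (G/2)·√(P(Tr(A) + ‖B‖_F·√(log₂(√(P(Tr(A)+‖B‖_F))/(2ε_T))/(4C²))))`. -/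
theorem dynamic_regret_lower_bound_frontier (T : ℕ) (hT : 1 ≤ T)
    (G εT C : ℝ) (hG : 0 < G) (hε : 0 < εT) (hC : 1 ≤ C)
    (hanti : RademacherAnticoncentration T C)
    (alg : Fin T → (Fin T → ℝ) → ℝ)
    (hcausal : ∀ (t : Fin T) (g g' : Fin T → ℝ),
      (∀ s : Fin T, s < t → g s = g' s) → alg t g = alg t g')
    (hregret : ∀ g : Fin T → ℝ, (∀ t, |g t| ≤ G) →
      ∑ t : Fin T, g t * alg t g ≤ G * εT)
    (M : Matrix (Fin T) (Fin T) ℝ) (hM : M.PosDef)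
    (A B : Matrix (Fin T) (Fin T) ℝ) (hA : A = M⁻¹)
    (hB : B = A - Matrix.diagonal (fun i => A i i)) (hBne : B ≠ 0)
    (hBF : ((T : ℝ) / 2) * (⨆ i : Fin T, ∑ j : Fin T, (B i j)^2)
            ≤ ∑ i : Fin T, ∑ j : Fin T, (B i j)^2) :
    ∀ P : ℝ, 0 < P →
      4 * C^2 ≤ Real.logb 2
          (Real.sqrt (P * (A.trace + frobNorm B)) / (2 * εT)) →
      Real.logb 2 (Real.sqrt (P * (A.trace + frobNorm B)) / (2 * εT)) ≤ T →
      ∃ g u : Fin T → ℝ,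
        (∀ t, |g t| ≤ G) ∧
        Real.sqrt (u ⬝ᵥ (M *ᵥ u)) = Real.sqrt P ∧
        G * εT + (G / 2) * Real.sqrt (P * (A.trace + frobNorm B *
            Real.sqrt (Real.logb 2
                (Real.sqrt (P * (A.trace + frobNorm B)) / (2 * εT))
              / (4 * C^2))))
          ≤ ∑ t : Fin T, g t * (alg t g - u t) :=
  dynamic_regret_lower_bound_frontier_general T G εT C hG hε hC hanti alg hcausal hregret M hM A B
    hA hB hBne hBF
end

section
/- Let n ≥ 1, T = 2^n, d ≥ 1, and let H_n ∈ ℝ^{T×T} be the unnormalized Haar matrix. For u_1,…,u_T ∈ ℝ^d let ũ := ∑_{t=1}^T e_t ⊗ u_t ∈ ℝ^{dT}, and for σ ∈ {1,2,4,…,T} and j ∈ {1,…,T/σ} define the local average ū_j^{(σ)} := (1/σ) ∑_{t=(j−1)σ+1}^{jσ} u_t ∈ ℝ^d, with ū := ū_1^{(T)} the overall average. Then H_nH_nᵀ is invertible and, with M := (H_nH_nᵀ)^{−1} ⊗ I_d, the weighted squared norm decomposes over timescales as ũᵀ M ũ = ‖ū‖₂² + ∑_{k=0}^{n−1} (1/4)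 ∑_{i=1}^{2^{n−1−k}} ‖ū_{2i−1}^{(2^k)} − ū_{2i}^{(2^k)}‖₂². -/
/-!
The columns of `H = haarMatrix n` are pairwise orthogonal: two Haar vectors of the same scale
have disjoint supports, and a coarser one (or `h₀`) is constant on the support of a finer one,
whose entries sum to zero. Hence `Hᵀ H = D` is diagonal, with `D = 2ⁿ` on `h₀` and `D = 2σ` on
the Haar vectors of scale `2σ`, so `(H Hᵀ)⁻¹ = H D⁻² Hᵀ` and `ũᵀ M ũ = ∑ₓ ∑_c (D_c⁻¹ ⟨h_c, uₓ⟩)²`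
is a sum of squared Haar coefficients. The coefficient of `h₀` is the overall average `ū`, and
that of `h_i^{(2σ)}` is half the difference `ū_{2i-1}^{(σ)} - ū_{2i}^{(σ)}` of the averages over
its two halves.
-/

open Matrix Finset
open scoped Kronecker

/-- The Haar basis vector `h_i^{(τ)} ∈ ℝ^T` (with 1-based location `i` and
0-based row index `t`, so `[h_i^{(τ)}]_{t+1}`): `1` on the first half of the
`i`-th block of length `τ`, `−1` on the second half, `0` elsewhere. -/
def haarVec (τ i t : ℕ) : ℝ :=
  if (i - 1) * τ ≤ t ∧ t < (i - 1) * τ + τ / 2 then 1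
  else if (i - 1) * τ + τ / 2 ≤ t ∧ t < i * τ then -1
  else 0

/-- The unnormalized Haar matrix `H_n ∈ ℝ^{T×T}`, `T = 2^n`: its first column
(0-based column `0`) is the all-ones vector `h_0`, and its `(T/τ + i)`-th
column (1-based; 0-based column `c = T/τ + i − 1 = 2^m + (i−1)` with
`m = log₂(T/τ)`, so `m = Nat.log 2 c`, `τ = 2^n/2^m`, `i = c − 2^m + 1`)
is `h_i^{(τ)}`, for `τ ∈ {2,4,…,T}` and `i ∈ {1,…,T/τ}`. -/
def haarMatrix (n : ℕ) : Matrix (Fin (2^n)) (Fin (2^n)) ℝ :=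
  fun t c =>
    if (c : ℕ) = 0 then 1
    else haarVec (2^n / 2^(Nat.log 2 c)) ((c : ℕ) - 2^(Nat.log 2 c) + 1) t

/-- The local average `ū_j^{(σ)} := (1/σ)·∑_{t=(j−1)σ+1}^{jσ} u_t ∈ ℝ^d`, with
1-based block index `j` and the comparators indexed 0-based
(`u_1,…,u_T ↦ u 0,…,u (T−1)`). -/
noncomputable def localAvg (d : ℕ) (u : ℕ → Fin d → ℝ) (σ j : ℕ) : Fin d → ℝ :=
  fun x => (1 / (σ : ℝ)) * ∑ t ∈ Finset.Ico ((j - 1) * σ) (j * σ), u t x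

section LinearAlgebra

variable {ι : Type*} [Fintype ι]

theorem mul_transpose_mul_mul_diagonal_inv_sq_eq_one {K : Type*} [DecidableEq ι] [Field K]
    {H : Matrix ι ι K} {D : ι → K} (hH : Hᵀ * H = diagonal D) (hD : ∀ c, D c ≠ 0) :
    H * Hᵀ * (H * diagonal (fun c => (D c)⁻¹ ^ 2) * Hᵀ) = 1 := by
  have hleft : Hᵀ * (H * diagonal fun c => (D c)⁻¹) = 1 := by
    rw [← Matrix.mul_assoc, hH, diagonal_mul_diagonal, ← diagonal_one]
    exact congrArg diagonal (funext fun c => mul_inv_cancel₀ (hD c))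
  calc H * Hᵀ * (H * diagonal (fun c => (D c)⁻¹ ^ 2) * Hᵀ)
      = H * diagonal (fun c => D c * (D c)⁻¹ ^ 2) * Hᵀ := by
        rw [← diagonal_mul_diagonal, ← hH]; simp only [Matrix.mul_assoc]
    _ = (H * diagonal fun c => (D c)⁻¹) * Hᵀ := by
        congr; funext c; field_simp [hD c]
    _ = 1 := mul_eq_one_comm.mp hleft

variable {R : Type*} [CommSemiring R]

theorem dotProduct_kronecker_one_mulVec {κ : Type*} [Fintype κ] [DecidableEq κ]
    (B : Matrix ι ι R) (w : ι × κ → R) :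
    w ⬝ᵥ ((B ⊗ₖ (1 : Matrix κ κ R)) *ᵥ w)
      = ∑ x, (fun t => w (t, x)) ⬝ᵥ (B *ᵥ fun t => w (t, x)) := by
  simp only [dotProduct, mulVec, kroneckerMap_apply, one_apply, mul_ite, mul_one, mul_zero,
    ite_mul, zero_mul, Fintype.sum_prod_type, sum_comm (γ := κ), sum_ite_eq, mem_univ, if_true]

theorem dotProduct_mul_diagonal_mul_transpose_mulVec {ι' : Type*} [Fintype ι'] [DecidableEq ι']
    (H : Matrix ι ι' R) (e : ι' → R) (v : ι → R) :
    v ⬝ᵥ ((H * diagonal e * Hᵀ) *ᵥ v) = ∑ c, e c * (v ᵥ* H) c ^ 2 := by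
  rw [← mulVec_mulVec, ← mulVec_mulVec, dotProduct_mulVec, mulVec_transpose, dotProduct]
  simp only [mulVec_diagonal]
  exact Finset.sum_congr rfl fun c _ => by ring

end LinearAlgebra

section Blocks

def block (σ j : ℕ) : Finset ℕ := Ico ((j - 1) * σ) (j * σ)

variable {σ j t : ℕ}

theorem mem_block_iff (hσ : 0 < σ) (hj : 1 ≤ j) : t ∈ block σ j ↔ t / σ = j - 1 := by
  obtain ⟨k, rfl⟩ : ∃ k, j = k + 1 := ⟨j - 1, by omega⟩
  rw [block, mem_Ico, Nat.add_sub_cancel]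
  refine ⟨fun h => Nat.div_eq_of_lt_le h.1 h.2, ?_⟩
  rintro rfl
  exact ⟨Nat.div_mul_le_self t σ, (Nat.div_lt_iff_lt_mul hσ).1 (Nat.lt_succ_self _)⟩

theorem card_block (hj : 1 ≤ j) : (block σ j).card = σ := by
  rw [block, Nat.card_Ico, ← Nat.sub_mul, Nat.sub_sub_self hj, one_mul]

theorem block_subset_range {T : ℕ} (h : j * σ ≤ T) : block σ j ⊆ range T := fun t ht => by
  rw [block, mem_Ico] at ht; rw [mem_range]; omega

theorem block_subset_block_two_mul {i : ℕ} (hσ : 0 < σ) (hi : 1 ≤ i)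
    (hj : j = 2 * i - 1 ∨ j = 2 * i) : block σ j ⊆ block (2 * σ) i := fun t ht => by
  rw [mem_block_iff hσ (by omega)] at ht
  rw [mem_block_iff (by omega) hi, mul_comm, ← Nat.div_div_eq_div_mul]
  omega

theorem localAvg_eq (d : ℕ) (u : ℕ → Fin d → ℝ) (x : Fin d) :
    localAvg d u σ j x = (σ : ℝ)⁻¹ * ∑ t ∈ block σ j, u t x := by
  rw [localAvg, block, one_div]

end Blocks

section HaarVec

variable {σ i T : ℕ}

theorem haarVec_two_mul (hi : 1 ≤ i) (t : ℕ) :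
    haarVec (2 * σ) i t =
      (if t ∈ block σ (2 * i - 1) then 1 else 0) - if t ∈ block σ (2 * i) then 1 else 0 := by
  obtain ⟨k, rfl⟩ : ∃ k, i = k + 1 := ⟨i - 1, by omega⟩
  have e₁ : (2 * (k + 1) - 1 - 1) * σ = k * (2 * σ) := by
    rw [show 2 * (k + 1) - 1 - 1 = 2 * k by omega]; ring
  have e₂ : (2 * (k + 1) - 1) * σ = k * (2 * σ) + σ := by
    rw [show 2 * (k + 1) - 1 = 2 * k + 1 by omega]; ring
  have e₃ : 2 * (k + 1) * σ = k * (2 * σ) + 2 * σ := by ring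
  have e₄ : (k + 1) * (2 * σ) = k * (2 * σ) + 2 * σ := by ring
  simp only [haarVec, block, mem_Ico, Nat.add_sub_cancel, e₁, e₂, e₃, e₄,
    Nat.mul_div_cancel_left σ two_pos]
  generalize k * (2 * σ) = a
  split_ifs <;> norm_num
  omega

theorem haarVec_two_mul_congr (hσ : 0 < σ) (hi : 1 ≤ i) {t s : ℕ} (h : t / σ = s / σ) :
    haarVec (2 * σ) i t = haarVec (2 * σ) i s := by
  simp only [haarVec_two_mul hi, mem_block_iff hσ (by omega : 1 ≤ 2 * i - 1),
    mem_block_iff hσ (by omega : 1 ≤ 2 * i), h]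

theorem haarVec_two_mul_eq_zero (hσ : 0 < σ) (hi : 1 ≤ i) {t : ℕ} (ht : t ∉ block (2 * σ) i) :
    haarVec (2 * σ) i t = 0 := by
  rw [haarVec_two_mul hi, if_neg fun h => ht (block_subset_block_two_mul hσ hi (.inl rfl) h),
    if_neg fun h => ht (block_subset_block_two_mul hσ hi (.inr rfl) h), sub_zero]

theorem haarVec_two_mul_mul_haarVec_two_mul_of_ne (hσ : 0 < σ) {i' : ℕ} (hi : 1 ≤ i) (hi' : 1 ≤ i')
    (hne : i ≠ i') (t : ℕ) : haarVec (2 * σ) i t * haarVec (2 * σ) i' t = 0 := by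
  by_cases ht : t ∈ block (2 * σ) i
  · have ht' : t ∉ block (2 * σ) i' := by
      rw [mem_block_iff (by omega) hi] at ht
      rw [mem_block_iff (by omega) hi']
      omega
    rw [haarVec_two_mul_eq_zero hσ hi' ht', mul_zero]
  · rw [haarVec_two_mul_eq_zero hσ hi ht, zero_mul]

theorem sum_range_haarVec_two_mul_mul (hi : 1 ≤ i) (hT : 2 * i * σ ≤ T) (v : ℕ → ℝ) :
    ∑ t ∈ range T, haarVec (2 * σ) i t * v t
      = ∑ t ∈ block σ (2 * i - 1), v t - ∑ t ∈ block σ (2 * i), v t := by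
  have h₁ : block σ (2 * i - 1) ⊆ range T :=
    block_subset_range ((Nat.mul_le_mul_right σ (Nat.sub_le _ _)).trans hT)
  simp only [haarVec_two_mul hi, sub_mul, ite_mul, one_mul, zero_mul, sum_sub_distrib,
    sum_ite_mem, inter_eq_right.2 h₁, inter_eq_right.2 (block_subset_range hT)]

theorem sum_range_haarVec_two_mul_mul_eq_zero (hσ : 0 < σ) (hi : 1 ≤ i) (hT : 2 * i * σ ≤ T)
    {v : ℕ → ℝ} {a : ℝ} (hv : ∀ t ∈ block (2 * σ) i, v t = a) :
    ∑ t ∈ range T, haarVec (2 * σ) i t * v t = 0 := by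
  have hsum : ∀ j, (j = 2 * i - 1 ∨ j = 2 * i) → ∑ t ∈ block σ j, v t = σ * a := fun j hj => by
    rw [sum_congr rfl fun t ht => hv t (block_subset_block_two_mul hσ hi hj ht), sum_const,
      card_block (by omega), nsmul_eq_mul]
  rw [sum_range_haarVec_two_mul_mul hi hT, hsum _ (.inl rfl), hsum _ (.inr rfl), sub_self]

theorem sum_range_haarVec_two_mul_mul_self (hi : 1 ≤ i) (hT : 2 * i * σ ≤ T) :
    ∑ t ∈ range T, haarVec (2 * σ) i t * haarVec (2 * σ) i t = 2 * σ := by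
  have hdisj : ∀ t ∈ block σ (2 * i - 1), t ∉ block σ (2 * i) := fun t ht ht' => by
    simp only [block, mem_Ico] at ht ht'
    omega
  have h₁ : ∀ t ∈ block σ (2 * i - 1), haarVec (2 * σ) i t = 1 := fun t ht => by
    rw [haarVec_two_mul hi, if_pos ht, if_neg (hdisj t ht), sub_zero]
  have h₂ : ∀ t ∈ block σ (2 * i), haarVec (2 * σ) i t = -1 := fun t ht => by
    rw [haarVec_two_mul hi, if_pos ht, if_neg fun h => hdisj t h ht, zero_sub]
  rw [sum_range_haarVec_two_mul_mul hi hT, sum_congr rfl h₁, sum_congr rfl h₂, sum_const,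
    sum_const, card_block (by omega), card_block (by omega), nsmul_one, smul_neg, nsmul_one]
  ring

end HaarVec

section HaarColumns

variable {n k i c : ℕ}

def haarCol (n c t : ℕ) : ℝ :=
  if c = 0 then 1 else haarVec (2 ^ n / 2 ^ Nat.log 2 c) (c - 2 ^ Nat.log 2 c + 1) t

theorem haarMatrix_apply (t c : Fin (2 ^ n)) : haarMatrix n t c = haarCol n c t := rfl

theorem haarCol_zero (t : ℕ) : haarCol n 0 t = 1 := if_pos rfl

theorem two_mul_mul_two_pow_le (hk : k < n) (hi : i ≤ 2 ^ (n - 1 - k)) :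
    2 * i * 2 ^ k ≤ 2 ^ n :=
  calc 2 * i * 2 ^ k ≤ 2 * 2 ^ (n - 1 - k) * 2 ^ k := by gcongr
    _ = 2 ^ n := by rw [← pow_succ', ← pow_add]; congr 1; omega

theorem log_two_pow_add_sub_one {m : ℕ} (hi : 1 ≤ i) (hi' : i ≤ 2 ^ m) :
    Nat.log 2 (2 ^ m + i - 1) = m :=
  Nat.log_eq_of_pow_le_of_lt_pow (by omega) (by rw [pow_succ]; omega)

theorem exists_eq_two_pow_add (hc : c ≠ 0) (hcn : c < 2 ^ n) :
    ∃ k i, k < n ∧ 1 ≤ i ∧ i ≤ 2 ^ (n - 1 - k) ∧ c = 2 ^ (n - 1 - k) + i - 1 := by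
  have hlog : Nat.log 2 c < n := Nat.log_lt_of_lt_pow hc hcn
  have hlo := Nat.pow_log_le_self 2 hc
  have hhi : c < 2 ^ (Nat.log 2 c + 1) := Nat.lt_pow_succ_log_self one_lt_two c
  rw [pow_succ] at hhi
  refine ⟨n - 1 - Nat.log 2 c, c - 2 ^ Nat.log 2 c + 1, by omega, by omega, ?_, ?_⟩ <;>
    rw [show n - 1 - (n - 1 - Nat.log 2 c) = Nat.log 2 c by omega] <;> omega

theorem haarCol_two_pow_add (hk : k < n) (hi : 1 ≤ i) (hi' : i ≤ 2 ^ (n - 1 - k)) (t : ℕ) :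
    haarCol n (2 ^ (n - 1 - k) + i - 1) t = haarVec (2 * 2 ^ k) i t := by
  have hdiv : 2 ^ n / 2 ^ (n - 1 - k) = 2 * 2 ^ k := by
    rw [Nat.pow_div (by omega) two_pos, ← pow_succ']; congr 1; omega
  have hpos : 0 < 2 ^ (n - 1 - k) := by positivity
  rw [haarCol, if_neg (by omega), log_two_pow_add_sub_one hi hi', hdiv,
    show 2 ^ (n - 1 - k) + i - 1 - 2 ^ (n - 1 - k) + 1 = i by omega]

def haarColNormSq (n c : ℕ) : ℝ := if c = 0 then 2 ^ n else 2 * 2 ^ (n - 1 - Nat.log 2 c)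

theorem haarColNormSq_two_pow_add (hk : k < n) (hi : 1 ≤ i) (hi' : i ≤ 2 ^ (n - 1 - k)) :
    haarColNormSq n (2 ^ (n - 1 - k) + i - 1) = 2 * 2 ^ k := by
  have hpos : 0 < 2 ^ (n - 1 - k) := by positivity
  rw [haarColNormSq, if_neg (by omega), log_two_pow_add_sub_one hi hi',
    show n - 1 - (n - 1 - k) = k by omega]

theorem haarCol_congr (hc : c < 2 ^ (n - 1 - k)) {t s : ℕ}
    (h : t / (2 * 2 ^ k) = s / (2 * 2 ^ k)) : haarCol n c t = haarCol n c s := by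
  rcases eq_or_ne c 0 with rfl | hc₀
  · rw [haarCol_zero, haarCol_zero]
  obtain ⟨k₀, i, hk₀, hi, hi', rfl⟩ :=
    exists_eq_two_pow_add (n := n) hc₀ (hc.trans_le (Nat.pow_le_pow_right two_pos (by omega)))
  have hkk₀ : n - 1 - k₀ < n - 1 - k :=
    (Nat.pow_lt_pow_iff_right one_lt_two).1 (by omega)
  have hpow : 2 ^ k₀ = 2 * 2 ^ k * 2 ^ (k₀ - k - 1) := by
    rw [← pow_succ', ← pow_add]; congr 1; omega
  rw [haarCol_two_pow_add hk₀ hi hi', haarCol_two_pow_add hk₀ hi hi']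
  refine haarVec_two_mul_congr (by positivity) hi ?_
  rw [hpow, ← Nat.div_div_eq_div_mul _ (2 * 2 ^ k), ← Nat.div_div_eq_div_mul _ (2 * 2 ^ k), h]

theorem sum_range_haarCol_mul_haarCol_of_lt {c' : ℕ} (hcc : c < c') (hc' : c' < 2 ^ n) :
    ∑ t ∈ range (2 ^ n), haarCol n c t * haarCol n c' t = 0 := by
  obtain ⟨k, i, hk, hi, hi', rfl⟩ := exists_eq_two_pow_add (by omega) hc'
  have hσ : 0 < 2 ^ k := by positivity
  have hT := two_mul_mul_two_pow_le hk hi'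
  simp only [haarCol_two_pow_add hk hi hi']
  by_cases hc : c < 2 ^ (n - 1 - k)
  · simp only [mul_comm (haarCol n c _)]
    refine sum_range_haarVec_two_mul_mul_eq_zero hσ hi hT
      (a := haarCol n c ((i - 1) * (2 * 2 ^ k))) fun t ht => haarCol_congr hc ?_
    rw [(mem_block_iff (by positivity) hi).1 ht, Nat.mul_div_cancel _ (by positivity)]
  · obtain ⟨i₀, hi₀, rfl⟩ : ∃ i₀, 1 ≤ i₀ ∧ c = 2 ^ (n - 1 - k) + i₀ - 1 :=
      ⟨c + 1 - 2 ^ (n - 1 - k), by omega, by omega⟩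
    simp only [haarCol_two_pow_add hk hi₀ (by omega)]
    exact sum_eq_zero fun t _ => haarVec_two_mul_mul_haarVec_two_mul_of_ne hσ hi₀ hi (by omega) t

theorem sum_range_haarCol_mul_self (hc : c < 2 ^ n) :
    ∑ t ∈ range (2 ^ n), haarCol n c t * haarCol n c t = haarColNormSq n c := by
  rcases eq_or_ne c 0 with rfl | hc₀
  · simp [haarCol_zero, haarColNormSq]
  obtain ⟨k, i, hk, hi, hi', rfl⟩ := exists_eq_two_pow_add hc₀ hc
  simp only [haarCol_two_pow_add hk hi hi', haarColNormSq_two_pow_add hk hi hi',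
    sum_range_haarVec_two_mul_mul_self hi (two_mul_mul_two_pow_le hk hi')]
  push_cast
  rfl

theorem haarMatrix_transpose_mul_self :
    (haarMatrix n)ᵀ * haarMatrix n = diagonal fun c : Fin (2 ^ n) => haarColNormSq n c := by
  ext c c'
  rw [mul_apply, diagonal_apply]
  simp only [transpose_apply, haarMatrix_apply]
  rw [Fin.sum_univ_eq_sum_range (fun t => haarCol n c t * haarCol n c' t)]
  split_ifs with h
  · rw [h]; exact sum_range_haarCol_mul_self c'.2
  · rcases lt_or_gt_of_ne (Fin.val_ne_of_ne h) with hlt | hlt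
    · exact sum_range_haarCol_mul_haarCol_of_lt hlt c'.2
    · simp only [mul_comm (haarCol n c _)]
      exact sum_range_haarCol_mul_haarCol_of_lt hlt c.2

theorem haarColNormSq_ne_zero (c : ℕ) : haarColNormSq n c ≠ 0 := by
  unfold haarColNormSq; split_ifs <;> positivity

end HaarColumns

theorem sum_range_two_pow_eq_add_sum_levels {M : Type*} [AddCommMonoid M] (G : ℕ → M) (n : ℕ) :
    ∑ c ∈ range (2 ^ n), G c
      = G 0 + ∑ k ∈ range n, ∑ i ∈ Icc 1 (2 ^ (n - 1 - k)), G (2 ^ (n - 1 - k) + i - 1) := by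
  suffices ∑ c ∈ range (2 ^ n), G c
      = G 0 + ∑ m ∈ range n, ∑ i ∈ Icc 1 (2 ^ m), G (2 ^ m + i - 1) by
    rw [this, ← sum_range_reflect]
  induction n with
  | zero => simp
  | succ n ih =>
    have hlevel : ∑ c ∈ Ico (2 ^ n) (2 ^ (n + 1)), G c
        = ∑ i ∈ Icc 1 (2 ^ n), G (2 ^ n + i - 1) := by
      rw [sum_Ico_eq_sum_range, ← Ico_add_one_right_eq_Icc, sum_Ico_eq_sum_range, pow_succ,
        show 2 ^ n * 2 - 2 ^ n = 2 ^ n by omega, Nat.add_sub_cancel]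
      simp only [add_comm 1, ← add_assoc, Nat.add_sub_cancel]
    rw [← sum_range_add_sum_Ico _ (Nat.pow_le_pow_right two_pos n.le_succ), ih, hlevel,
      sum_range_succ, add_assoc]

section HaarCoeff

variable {d n : ℕ} (u : ℕ → Fin d → ℝ) (x : Fin d)

noncomputable def haarCoeff (n : ℕ) (v : ℕ → ℝ) (c : ℕ) : ℝ :=
  (haarColNormSq n c)⁻¹ * ∑ t ∈ range (2 ^ n), v t * haarCol n c t

theorem inv_haarColNormSq_mul_vecMul_haarMatrix (c : Fin (2 ^ n)) :
    (haarColNormSq n c)⁻¹ * ((fun t : Fin (2 ^ n) => u t x) ᵥ* haarMatrix n) c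
      = haarCoeff n (fun t => u t x) c := by
  rw [haarCoeff, ← Fin.sum_univ_eq_sum_range (fun t => u t x * haarCol n c t)]
  rfl

theorem haarCoeff_zero : haarCoeff n (fun t => u t x) 0 = localAvg d u (2 ^ n) 1 x := by
  simp only [haarCoeff, haarColNormSq, if_pos, haarCol_zero, mul_one, localAvg_eq, block,
    Nat.sub_self, zero_mul, one_mul, ← range_eq_Ico]
  push_cast
  rfl

theorem haarCoeff_two_pow_add {k i : ℕ} (hk : k < n) (hi : 1 ≤ i) (hi' : i ≤ 2 ^ (n - 1 - k)) :
    haarCoeff n (fun t => u t x) (2 ^ (n - 1 - k) + i - 1)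
      = (localAvg d u (2 ^ k) (2 * i - 1) x - localAvg d u (2 ^ k) (2 * i) x) / 2 := by
  simp only [haarCoeff, haarColNormSq_two_pow_add hk hi hi', haarCol_two_pow_add hk hi hi',
    mul_comm (u _ x), sum_range_haarVec_two_mul_mul hi (two_mul_mul_two_pow_le hk hi'),
    localAvg_eq]
  push_cast
  field_simp

end HaarCoeff

theorem haar_weighted_norm_decomposition_general (n d : ℕ)
    (u : ℕ → Fin d → ℝ) :
    IsUnit (haarMatrix n * (haarMatrix n)ᵀ) ∧
    (fun p : Fin (2^n) × Fin d => u p.1 p.2) ⬝ᵥ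
        (((haarMatrix n * (haarMatrix n)ᵀ)⁻¹ ⊗ₖ (1 : Matrix (Fin d) (Fin d) ℝ)) *ᵥ
          (fun p : Fin (2^n) × Fin d => u p.1 p.2))
      = (∑ x : Fin d, (localAvg d u (2^n) 1 x)^2)
        + ∑ k ∈ Finset.range n, (1/4 : ℝ) *
            ∑ i ∈ Finset.Icc 1 (2^(n - 1 - k)), ∑ x : Fin d,
              (localAvg d u (2^k) (2*i - 1) x - localAvg d u (2^k) (2*i) x)^2 := by
  have hinv := mul_transpose_mul_mul_diagonal_inv_sq_eq_one haarMatrix_transpose_mul_self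
    fun c : Fin (2 ^ n) => haarColNormSq_ne_zero c
  refine ⟨(isUnit_iff_isUnit_det _).2 (isUnit_det_of_right_inverse hinv), ?_⟩
  rw [inv_eq_right_inv hinv, dotProduct_kronecker_one_mulVec]
  simp only [dotProduct_mul_diagonal_mul_transpose_mulVec, ← mul_pow,
    inv_haarColNormSq_mul_vecMul_haarMatrix]
  rw [sum_comm, Fin.sum_univ_eq_sum_range (fun c => ∑ x, haarCoeff n (fun t => u t x) c ^ 2),
    sum_range_two_pow_eq_add_sum_levels]
  simp only [haarCoeff_zero]
  refine congrArg _ (sum_congr rfl fun k hk => ?_)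
  rw [mul_sum]
  refine sum_congr rfl fun i hi => ?_
  rw [mul_sum]
  refine sum_congr rfl fun x _ => ?_
  rw [haarCoeff_two_pow_add u x (mem_range.1 hk) (mem_Icc.1 hi).1 (mem_Icc.1 hi).2]
  ring

/-- **Multiscale decomposition of the Haar-weighted norm.**
`H_nH_nᵀ` is invertible and, with `M := (H_nH_nᵀ)⁻¹ ⊗ I_d` and `ũ` the
concatenation of `u_1,…,u_T` (`T = 2^n`),
`ũᵀMũ = ‖ū‖₂² + ∑_{k=0}^{n−1} (1/4) ∑_{i=1}^{2^{n−1−k}}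
‖ū_{2i−1}^{(2^k)} − ū_{2i}^{(2^k)}‖₂²`, where `ū = ū_1^{(T)}` is the overall
average. -/
theorem haar_weighted_norm_decomposition (n d : ℕ) (hn : 1 ≤ n) (hd : 1 ≤ d)
    (u : ℕ → Fin d → ℝ) :
    IsUnit (haarMatrix n * (haarMatrix n)ᵀ) ∧
    (fun p : Fin (2^n) × Fin d => u p.1 p.2) ⬝ᵥ
        (((haarMatrix n * (haarMatrix n)ᵀ)⁻¹ ⊗ₖ (1 : Matrix (Fin d) (Fin d) ℝ)) *ᵥ
          (fun p : Fin (2^n) × Fin d => u p.1 p.2))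
      = (∑ x : Fin d, (localAvg d u (2^n) 1 x)^2)
        + ∑ k ∈ Finset.range n, (1/4 : ℝ) *
            ∑ i ∈ Finset.Icc 1 (2^(n - 1 - k)), ∑ x : Fin d,
              (localAvg d u (2^k) (2*i - 1) x - localAvg d u (2^k) (2*i) x)^2 :=
  haar_weighted_norm_decomposition_general n d u
end

section
/- Let T ≥ 1 and let Σ ∈ ℝ^{T×T} be the difference matrix with Σ_{tt} = 1 for all t, Σ_{t,t+1} = −1 for 1 ≤ t ≤ T−1, and all other entries 0. Then for all i, j ∈ {1,…,T}, the entries of Σ^{−1}Σ^{−ᵀ} are given by [Σ^{−1}Σ^{−ᵀ}]_{ij} = T − max{i, j} + 1; in particular, Tr(Σ^{−1}Σ^{−ᵀ}) = T(T+1)/2. -/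
open Matrix Finset

/-- The difference matrix `Σ ∈ ℝ^{T×T}`: ones on the diagonal, `−1` on the
superdiagonal, zeros elsewhere. -/
def diffMatrix (T : ℕ) : Matrix (Fin T) (Fin T) ℝ :=
  fun i j => if i = j then 1 else if (j : ℕ) = (i : ℕ) + 1 then -1 else 0

/-- The upper-triangular all-ones matrix: the inverse of `diffMatrix`. -/
def upperOnes (T : ℕ) : Matrix (Fin T) (Fin T) ℝ :=
  fun i j => if i ≤ j then 1 else 0

lemma diffMatrix_mul_upperOnes (T : ℕ) : diffMatrix T * upperOnes T = 1 := by
  ext i j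
  rw [Matrix.mul_apply]
  have hsplit : ∀ k : Fin T,
      diffMatrix T i k * upperOnes T k j
        = (if i = k then (if k ≤ j then (1:ℝ) else 0) else 0)
          - (if (k : ℕ) = (i : ℕ) + 1 then (if k ≤ j then (1:ℝ) else 0) else 0) := by
    intro k
    simp only [diffMatrix, upperOnes]
    rcases eq_or_ne i k with h1 | h1
    · subst h1
      rw [if_pos rfl, if_pos rfl, if_neg (by omega : ¬ ((i : ℕ) = (i : ℕ) + 1))]
      ring
    · rw [if_neg h1, if_neg h1]
      by_cases h2 : (k : ℕ) = (i : ℕ) + 1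
      · rw [if_pos h2, if_pos h2]; ring
      · rw [if_neg h2, if_neg h2]; ring
  rw [Finset.sum_congr rfl (fun k _ => hsplit k), Finset.sum_sub_distrib,
    Finset.sum_ite_eq Finset.univ i (fun k => if k ≤ j then (1:ℝ) else 0)]
  simp only [Finset.mem_univ, if_true]
  by_cases h : (i : ℕ) + 1 < T
  · have hiff : ∀ k : Fin T, ((k : ℕ) = (i : ℕ) + 1) ↔ k = ⟨(i : ℕ) + 1, h⟩ := by
      intro k; rw [Fin.ext_iff]
    have hsum2 : ∑ k : Fin T, (if (k : ℕ) = (i : ℕ) + 1 then (if k ≤ j then (1:ℝ) else 0) else 0)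
        = ∑ k : Fin T, (if k = ⟨(i : ℕ) + 1, h⟩ then (if k ≤ j then (1:ℝ) else 0) else 0) :=
      Finset.sum_congr rfl (fun k _ => by simp only [hiff])
    rw [hsum2,
      Finset.sum_ite_eq' Finset.univ (⟨(i : ℕ) + 1, h⟩ : Fin T)
        (fun k => if k ≤ j then (1:ℝ) else 0)]
    simp only [Finset.mem_univ, if_true, Matrix.one_apply]
    split_ifs with h1 h2 h3 h4 <;> try norm_num
    all_goals
      exfalso <;> simp only [Fin.le_def, Fin.ext_iff] at * <;> omega
  · have hz : ∀ k : Fin T,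
        (if (k : ℕ) = (i : ℕ) + 1 then (if k ≤ j then (1:ℝ) else 0) else 0) = 0 := by
      intro k
      have : (k : ℕ) < T := k.isLt
      rw [if_neg (by omega)]
    rw [Finset.sum_eq_zero (fun k _ => hz k)]
    have hi : (i : ℕ) < T := i.isLt
    have hj : (j : ℕ) < T := j.isLt
    simp only [Matrix.one_apply]
    split_ifs with h1 h2 <;> try norm_num
    all_goals
      exfalso <;> simp only [Fin.le_def, Fin.ext_iff] at * <;> omega

lemma sum_range_real (n : ℕ) : ∑ i ∈ Finset.range n, (i : ℝ) = n * (n - 1) / 2 := by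
  induction n with
  | zero => simp
  | succ n ih => rw [Finset.sum_range_succ, ih]; push_cast; ring

/-- **Entries and trace of `Σ⁻¹Σ⁻ᵀ`.**
With 1-based indices `i, j ∈ {1,…,T}` (here `i, j : Fin T` are 0-based, so the
1-based indices are `i+1, j+1`), `[Σ⁻¹Σ⁻ᵀ]_{ij} = T − max{i,j} + 1`; in
particular `Tr(Σ⁻¹Σ⁻ᵀ) = T(T+1)/2`. -/
theorem diffMatrix_inv_gram (T : ℕ) (hT : 1 ≤ T) :
    (∀ i j : Fin T, ((diffMatrix T)⁻¹ * ((diffMatrix T)⁻¹)ᵀ) i j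
        = (T : ℝ) - max ((i : ℕ) + 1) ((j : ℕ) + 1) + 1) ∧
    Matrix.trace ((diffMatrix T)⁻¹ * ((diffMatrix T)⁻¹)ᵀ)
      = (T : ℝ) * ((T : ℝ) + 1) / 2 := by
  have hinv : (diffMatrix T)⁻¹ = upperOnes T :=
    Matrix.inv_eq_right_inv (diffMatrix_mul_upperOnes T)
  have hentry : ∀ i j : Fin T, ((diffMatrix T)⁻¹ * ((diffMatrix T)⁻¹)ᵀ) i j
      = (T : ℝ) - max ((i : ℕ) + 1) ((j : ℕ) + 1) + 1 := by
    intro i j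
    rw [hinv, Matrix.mul_apply]
    have hs : ∀ k : Fin T, upperOnes T i k * (upperOnes T)ᵀ k j
        = if max i j ≤ k then (1:ℝ) else 0 := by
      intro k
      simp only [upperOnes, Matrix.transpose_apply, max_le_iff]
      by_cases h1 : i ≤ k <;> by_cases h2 : j ≤ k <;> simp [h1, h2]
    rw [Finset.sum_congr rfl (fun k _ => hs k), Finset.sum_boole]
    have hfilter : Finset.univ.filter (fun k => max i j ≤ k) = Finset.Ici (max i j) := by
      ext k; simp [Finset.mem_Ici]
    rw [hfilter, Fin.card_Ici]
    have hlt : ((max i j : Fin T) : ℕ) < T := (max i j).isLt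
    have hmax : ((max i j : Fin T) : ℕ) = max ((i : ℕ)) ((j : ℕ)) := by
      rcases le_total i j with h | h
      · rw [max_eq_right h, max_eq_right (Fin.le_def.mp h)]
      · rw [max_eq_left h, max_eq_left (Fin.le_def.mp h)]
    rw [Nat.cast_sub (le_of_lt hlt), hmax]
    have hm1 : max ((i : ℕ) + 1) ((j : ℕ) + 1) = max (i : ℕ) (j : ℕ) + 1 := by omega
    rw [hm1]
    push_cast
    ring
  refine ⟨hentry, ?_⟩
  unfold Matrix.trace
  have hdiag : ∀ i : Fin T, ((diffMatrix T)⁻¹ * ((diffMatrix T)⁻¹)ᵀ).diag i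
      = (T : ℝ) - ((i : ℕ) : ℝ) := by
    intro i
    rw [Matrix.diag_apply, hentry i i, max_self]
    push_cast
    ring
  rw [Finset.sum_congr rfl (fun i _ => hdiag i), Finset.sum_sub_distrib,
    Finset.sum_const, Finset.card_univ, Fintype.card_fin, nsmul_eq_mul,
    Fin.sum_univ_eq_sum_range (fun i => ((i : ℕ) : ℝ)), sum_range_real]
  ring
end

section
/- Let T ≥ 1 and let B ∈ ℝ^{T×T} be the matrix with B_{ij} = T − max{i,j} + 1 for i ≠ j and B_{ii} = 0 for all i (this is Σ^{−1}Σ^{−ᵀ} minus its diagonal, where Σ is the difference matrix with 1's on the diagonal and −1's on the superdiagonal). Then ‖B‖_F² = T²(T²−1)/6; for every i ∈ {1,…,T}, ∑_{j=1}^T B_{ij}² ≤ T(2T²−3T+1)/6; and consequently ‖B‖_F² ≥ (T/2)·max_{1≤i≤T} ∑_{j=1}^T B_{ij}². -/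
open Matrix Finset

/-- The matrix `B ∈ ℝ^{T×T}` with `B_{ij} = T − max{i,j} + 1` for `i ≠ j`
(1-based indices) and zero diagonal; this is `Σ⁻¹Σ⁻ᵀ` minus its diagonal,
where `Σ` is the difference matrix. Here `i, j : Fin T` are 0-based, so the
1-based indices are `i+1, j+1`. -/
def offDiagGram (T : ℕ) : Matrix (Fin T) (Fin T) ℝ :=
  fun i j => if i = j then 0 else (T : ℝ) - max ((i : ℕ) + 1) ((j : ℕ) + 1) + 1

private lemma sumRange_cast (n : ℕ) :
    ∑ k ∈ Finset.range n, (k : ℝ) = n * (n - 1) / 2 := by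
  induction n with
  | zero => simp
  | succ n ih => rw [Finset.sum_range_succ, ih]; push_cast; ring

private lemma sumRange_sq (n : ℕ) :
    ∑ k ∈ Finset.range n, (k : ℝ) ^ 2 = n * (n - 1) * (2 * n - 1) / 6 := by
  induction n with
  | zero => simp
  | succ n ih => rw [Finset.sum_range_succ, ih]; push_cast; ring

private lemma sumRange_cube (n : ℕ) :
    ∑ k ∈ Finset.range n, (k : ℝ) ^ 3 = (n * (n - 1) / 2) ^ 2 := by
  induction n with
  | zero => simp
  | succ n ih => rw [Finset.sum_range_succ, ih]; push_cast; ring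

/-- closed form for each row sum of squares -/
private lemma row_eq (T : ℕ) (i : Fin T) :
    ∑ j : Fin T, (offDiagGram T i j)^2
      = (i : ℝ) * ((T : ℝ) - i)^2
        + ((T : ℝ) - i - 1) * ((T : ℝ) - i) * (2 * ((T : ℝ) - i) - 1) / 6 := by
  set f : ℕ → ℝ := fun j =>
    if (i : ℕ) = j then 0 else ((T : ℝ) - (max ((i : ℕ) + 1) (j + 1) : ℕ) + 1)^2 with hf
  have hstep : ∀ j : Fin T, (offDiagGram T i j)^2 = f (j : ℕ) := by
    intro j
    simp only [offDiagGram, hf, Fin.ext_iff]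
    split <;> simp
  have hi : (i : ℕ) < T := i.isLt
  rw [Finset.sum_congr rfl (fun j _ => hstep j), Fin.sum_univ_eq_sum_range f T,
    ← Finset.sum_range_add_sum_Ico f (Nat.succ_le_of_lt hi),
    Finset.sum_range_succ]
  have h0 : f (i : ℕ) = 0 := by simp [hf]
  have h1 : ∑ j ∈ Finset.range (i : ℕ), f j
      = (i : ℕ) * ((T : ℝ) - ((i : ℕ) + 1) + 1)^2 := by
    rw [Finset.sum_congr rfl (fun j hj => ?_), Finset.sum_const, Finset.card_range,
      nsmul_eq_mul]
    rw [Finset.mem_range] at hj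
    have hne : (i : ℕ) ≠ j := by omega
    have hmax : max ((i : ℕ) + 1) (j + 1) = (i : ℕ) + 1 := by omega
    simp only [hf]
    rw [if_neg hne, hmax]
    push_cast
    ring
  have h2 : ∑ j ∈ Finset.Ico ((i : ℕ) + 1) T, f j
      = ((T : ℝ) - i - 1) * ((T : ℝ) - i) * (2 * ((T : ℝ) - i) - 1) / 6 := by
    have hcong : ∀ j ∈ Finset.Ico ((i : ℕ) + 1) T, f j = ((T : ℝ) - j)^2 := by
      intro j hj
      rw [Finset.mem_Ico] at hj
      have hne : (i : ℕ) ≠ j := by omega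
      have hmax : max ((i : ℕ) + 1) (j + 1) = j + 1 := by omega
      simp only [hf, hne, hmax, if_false]
      push_cast
      ring
    rw [Finset.sum_congr rfl hcong, Finset.sum_Ico_eq_sum_range]
    have hn : ((T - ((i : ℕ) + 1) : ℕ) : ℝ) = (T : ℝ) - i - 1 := by
      have : (i : ℕ) + 1 ≤ T := hi
      push_cast [Nat.cast_sub this]
      ring
    have hterm : ∀ k ∈ Finset.range (T - ((i : ℕ) + 1)),
        ((T : ℝ) - (((i : ℕ) + 1 + k : ℕ) : ℝ))^2
          = ((T - ((i : ℕ) + 1) : ℕ) : ℝ)^2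
            - 2 * ((T - ((i : ℕ) + 1) : ℕ) : ℝ) * k + (k : ℝ)^2 := by
      intro k _
      rw [hn]; push_cast; ring
    rw [Finset.sum_congr rfl hterm]
    rw [Finset.sum_add_distrib, Finset.sum_sub_distrib, Finset.sum_const,
      Finset.card_range, nsmul_eq_mul, ← Finset.mul_sum, sumRange_cast, sumRange_sq,
      hn]
    ring
  rw [h0, h1, h2]
  ring

/-- **Frobenius norm and row sums of `B`.**
`‖B‖_F² = T²(T²−1)/6`; every row satisfies
`∑_j B_{ij}² ≤ T(2T²−3T+1)/6`; and consequently
`‖B‖_F² ≥ (T/2)·max_i ∑_j B_{ij}²`. -/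
theorem offDiagGram_frobenius (T : ℕ) (hT : 1 ≤ T) :
    (∑ i : Fin T, ∑ j : Fin T, (offDiagGram T i j)^2
        = (T : ℝ)^2 * ((T : ℝ)^2 - 1) / 6) ∧
    (∀ i : Fin T, ∑ j : Fin T, (offDiagGram T i j)^2
        ≤ (T : ℝ) * (2 * (T : ℝ)^2 - 3 * (T : ℝ) + 1) / 6) ∧
    ((T : ℝ) / 2) * (⨆ i : Fin T, ∑ j : Fin T, (offDiagGram T i j)^2)
      ≤ ∑ i : Fin T, ∑ j : Fin T, (offDiagGram T i j)^2 := by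
  set t : ℝ := (T : ℝ) with ht
  set g : ℕ → ℝ := fun x =>
    (x : ℝ) * (t - x)^2 + (t - x - 1) * (t - x) * (2 * (t - x) - 1) / 6 with hg
  have hrow : ∀ i : Fin T, ∑ j : Fin T, (offDiagGram T i j)^2 = g (i : ℕ) :=
    fun i => row_eq T i
  -- total
  have htotal : ∑ i : Fin T, ∑ j : Fin T, (offDiagGram T i j)^2
      = t^2 * (t^2 - 1) / 6 := by
    rw [Finset.sum_congr rfl (fun i _ => hrow i), Fin.sum_univ_eq_sum_range g T]
    have expand : ∀ x ∈ Finset.range T, g x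
        = (2/3) * (x : ℝ)^3 + (-t - 1/2) * (x : ℝ)^2 + (t - 1/6) * (x : ℝ)
          + (2*t^3 - 3*t^2 + t) / 6 := by
      intro x _; simp only [hg]; ring
    rw [Finset.sum_congr rfl expand]
    simp only [Finset.sum_add_distrib, ← Finset.mul_sum, Finset.sum_const,
      Finset.card_range, nsmul_eq_mul, sumRange_cast, sumRange_sq, sumRange_cube]
    rw [← ht]
    ring
  -- row bound
  have hbound : ∀ i : Fin T, ∑ j : Fin T, (offDiagGram T i j)^2
      ≤ t * (2 * t^2 - 3 * t + 1) / 6 := by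
    intro i
    rw [hrow i]
    have hi : (i : ℕ) < T := i.isLt
    have hc1 : (i : ℝ) + 1 ≤ t := by rw [ht]; exact_mod_cast Nat.succ_le_of_lt hi
    have hc0 : (0 : ℝ) ≤ (i : ℝ) := Nat.cast_nonneg _
    have hcc : (0 : ℝ) ≤ (i : ℝ) * ((i : ℝ) - 1) := by
      rcases Nat.eq_zero_or_pos (i : ℕ) with h | h
      · simp [h]
      · have : (1 : ℝ) ≤ (i : ℝ) := by exact_mod_cast h
        nlinarith
    have hpos : (0 : ℝ) ≤ 2 * (i : ℝ) + 5 + 6 * (t - (i : ℝ) - 1) := by linarith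
    simp only [hg]
    nlinarith [mul_nonneg hcc hpos]
  refine ⟨htotal, hbound, ?_⟩
  have hsup : (⨆ i : Fin T, ∑ j : Fin T, (offDiagGram T i j)^2)
      ≤ t * (2 * t^2 - 3 * t + 1) / 6 := by
    have : Nonempty (Fin T) := Fin.pos_iff_nonempty.mp hT
    exact ciSup_le hbound
  have ht1 : (1 : ℝ) ≤ t := by rw [ht]; exact_mod_cast hT
  have ht0 : (0 : ℝ) ≤ t / 2 := by linarith
  calc (t / 2) * (⨆ i : Fin T, ∑ j : Fin T, (offDiagGram T i j)^2)
      ≤ (t / 2) * (t * (2 * t^2 - 3 * t + 1) / 6) :=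
        mul_le_mul_of_nonneg_left hsup ht0
    _ ≤ t^2 * (t^2 - 1) / 6 := by nlinarith [sq_nonneg t]
    _ = ∑ i : Fin T, ∑ j : Fin T, (offDiagGram T i j)^2 := htotal.symm
end

section
/- Let n ≥ 0 and let H_n be the unnormalized Haar matrix defined recursively. Then every diagonal entry of H_nH_nᵀ equals n+1: for all t ∈ {1,…,2^n}, [H_nH_nᵀ]_{tt} = n + 1 = log₂(2^n) + 1. -/
open Matrix Finset

/-- Entries (0-based) of the recursively defined unnormalized Haar matrix
`H_n ∈ ℝ^{2^n×2^n}`: `H_0 = (1)` and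
`H_n = [H_{n−1} ⊗ (1,1)ᵀ , I_{2^{n−1}} ⊗ (1,−1)ᵀ]` (blocks side by side).
Under the Kronecker identification of `Fin 2^{n−1} × Fin 2` with `Fin 2^n`
(`(i,p) ↦ 2i+p` for rows), the entry at row `t`, column `c` is
`H_{n−1}[t/2, c]` if `c < 2^{n−1}`, and otherwise
`δ_{t/2, c−2^{n−1}}·(−1)^{t mod 2}`. -/
def haarRecEntry : ℕ → ℕ → ℕ → ℝ
  | 0, _, _ => 1
  | n + 1, t, c =>
      if c < 2^n then haarRecEntry n (t / 2) c
      else if t / 2 = c - 2^n then (if t % 2 = 0 then 1 else -1) else 0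

/-- The recursively defined unnormalized Haar matrix. -/
def haarRec (n : ℕ) : Matrix (Fin (2^n)) (Fin (2^n)) ℝ :=
  fun t c => haarRecEntry n t c

lemma aux (n t : ℕ) (ht : t < 2^n) :
    ∑ c ∈ Finset.range (2^n), haarRecEntry n t c * haarRecEntry n t c = (n : ℝ) + 1 := by
  induction n generalizing t with
  | zero => simp [haarRecEntry]
  | succ n ih =>
    have h2 : 2^(n+1) = 2^n + 2^n := by ring
    rw [h2, Finset.sum_range_add]
    have ht2 : t / 2 < 2^n := Nat.div_lt_of_lt_mul (by omega)
    have h1 : ∑ c ∈ Finset.range (2^n), haarRecEntry (n+1) t c * haarRecEntry (n+1) t c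
        = (n : ℝ) + 1 := by
      rw [← ih (t/2) ht2]
      apply Finset.sum_congr rfl
      intro c hc
      simp only [Finset.mem_range] at hc
      simp [haarRecEntry, hc]
    have h2' : ∑ c ∈ Finset.range (2^n),
        haarRecEntry (n+1) t (2^n + c) * haarRecEntry (n+1) t (2^n + c) = 1 := by
      have : ∀ c ∈ Finset.range (2^n),
          haarRecEntry (n+1) t (2^n + c) * haarRecEntry (n+1) t (2^n + c)
          = if t / 2 = c then 1 else 0 := by
        intro c hc
        have hnc : ¬ (2^n + c < 2^n) := by omega
        simp only [haarRecEntry, hnc, if_false, Nat.add_sub_cancel_left]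
        by_cases h : t / 2 = c <;> by_cases hp : t % 2 = 0 <;> simp [h, hp]
      rw [Finset.sum_congr rfl this, Finset.sum_ite_eq (Finset.range (2^n)) (t/2) (fun _ => (1:ℝ))]
      simp [ht2]
    rw [h1, h2']
    push_cast
    ring

/-- **Diagonal of the Haar Gram matrix.** Every diagonal entry of `H_nH_nᵀ`
equals `n + 1 = log₂(2^n) + 1`. -/
theorem haarRec_gram_diagonal (n : ℕ) (t : Fin (2^n)) :
    (haarRec n * (haarRec n)ᵀ) t t = (n : ℝ) + 1 := by
  have := aux n t t.isLt
  rw [Matrix.mul_apply]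
  simp only [Matrix.transpose_apply, haarRec]
  rw [Fin.sum_univ_eq_sum_range (fun c => haarRecEntry n t c * haarRecEntry n t c)]
  exact this
end

section
/- Let n ≥ 0, T = 2^n, d ≥ 1, and let H_n be the unnormalized Haar matrix defined recursively. Let B := H_n ⊗ I_d ∈ ℝ^{dT×dT}. Then for every t ∈ {1,…,T} and every g ∈ ℝ^d, the quadratic form of BBᵀ at the embedded loss G_t := e_t ⊗ g satisfies G_tᵀ (BBᵀ) G_t = (log₂ T + 1)·‖g‖₂² = (n+1)·‖g‖₂². -/
open Matrix Finset
open scoped Kronecker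

lemma haar_row_sq (n : ℕ) : ∀ t : ℕ, t < 2^n →
    ∑ c ∈ range (2^n), (haarRecEntry n t c)^2 = (n : ℝ) + 1 := by
  induction n with
  | zero => intro t ht; simp [haarRecEntry]
  | succ n ih =>
    intro t ht
    have h2 : 2^(n+1) = 2^n + 2^n := by ring
    rw [h2, Finset.sum_range_add]
    have h1 : ∑ c ∈ range (2^n), (haarRecEntry (n+1) t c)^2 = (n : ℝ) + 1 := by
      rw [← ih (t/2) (Nat.div_lt_of_lt_mul (by rw [two_mul, ← h2]; exact ht))]
      apply Finset.sum_congr rfl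
      intro c hc
      simp only [Finset.mem_range] at hc
      simp [haarRecEntry, hc]
    rw [h1]
    have h2' : ∑ i ∈ range (2^n), (haarRecEntry (n+1) t (2^n + i))^2 = 1 := by
      have ht2 : t / 2 < 2^n := Nat.div_lt_of_lt_mul (by rw [two_mul, ← h2]; exact ht)
      rw [Finset.sum_eq_single (t/2)]
      · simp only [haarRecEntry]
        rw [if_neg (by omega), if_pos (by omega)]
        rcases Nat.mod_two_eq_zero_or_one t with h | h <;> simp [h]
      · intro b _ hb
        simp only [haarRecEntry]
        rw [if_neg (by omega), if_neg (by omega)]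
        simp
      · intro h; exact absurd (Finset.mem_range.mpr ht2) h
    rw [h2']
    push_cast
    ring

/-- **Quadratic form of the block Haar Gram matrix at an embedded loss.**
With `B := H_n ⊗ I_d` and `G_t := e_t ⊗ g`,
`G_tᵀ(BBᵀ)G_t = (log₂T + 1)·‖g‖₂² = (n+1)·‖g‖₂²`. -/
theorem haar_block_gram_quadratic_form (n d : ℕ) (hd : 1 ≤ d)
    (t : Fin (2^n)) (g : Fin d → ℝ) :
    (fun p : Fin (2^n) × Fin d => if p.1 = t then g p.2 else 0) ⬝ᵥ
        ((((haarRec n) ⊗ₖ (1 : Matrix (Fin d) (Fin d) ℝ)) *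
            ((haarRec n) ⊗ₖ (1 : Matrix (Fin d) (Fin d) ℝ))ᵀ) *ᵥ
          (fun p : Fin (2^n) × Fin d => if p.1 = t then g p.2 else 0))
      = ((n : ℝ) + 1) * ∑ x : Fin d, (g x)^2 := by
  set B := (haarRec n) ⊗ₖ (1 : Matrix (Fin d) (Fin d) ℝ) with hB
  set v : Fin (2^n) × Fin d → ℝ := fun p => if p.1 = t then g p.2 else 0 with hv
  have key : v ⬝ᵥ ((B * Bᵀ) *ᵥ v) = (Bᵀ *ᵥ v) ⬝ᵥ (Bᵀ *ᵥ v) := by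
    rw [← Matrix.mulVec_mulVec, Matrix.dotProduct_mulVec, ← Matrix.mulVec_transpose]
  rw [key]
  have hw : ∀ p : Fin (2^n) × Fin d, (Bᵀ *ᵥ v) p = haarRec n t p.1 * g p.2 := by
    rintro ⟨c, x⟩
    simp only [Matrix.mulVec, dotProduct, hB, hv, Matrix.transpose_apply,
      Matrix.kroneckerMap_apply, Matrix.one_apply]
    rw [Fintype.sum_prod_type]
    simp [mul_ite, ite_mul, Finset.sum_ite_eq, Finset.sum_ite_eq']
  simp only [dotProduct, hw]
  rw [Fintype.sum_prod_type]
  have : ∑ c : Fin (2^n), ∑ x : Fin d,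
      (haarRec n t c * g x) * (haarRec n t c * g x)
      = (∑ c : Fin (2^n), (haarRec n t c)^2) * ∑ x : Fin d, (g x)^2 := by
    rw [Finset.sum_mul_sum]
    apply Finset.sum_congr rfl; intro c _
    apply Finset.sum_congr rfl; intro x _
    ring
  rw [this]
  congr 1
  exact (Fin.sum_univ_eq_sum_range (fun c => (haarRecEntry n t c)^2) (2^n)).trans
    (haar_row_sq n t t.isLt)
end
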